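/- Let q ≥ 2 be an even integer, τ = i·√q, and let w ≥ 3 be an odd integer. Set A := q^{(w+1)/2}/2 (a rational integer), B := A/τ (an element of ℤ[τ], since τ^{w−1} divides A in ℤ[τ]), and s := (−1)^{(w+1)/2}. Then: (a) 1 and −1 are minimal norm representatives modulo τ^w; (b) A − 1 − τ is a minimal norm representative modulo τ^w; (c) −B − 1 is a minimal norm representative modulo τ^w; (d) −s − τ^{w−1} is a minimal norm representative modulo τ^w; (e) in ℤ[τ] the identity (A − 1 − τ)·τ^{w−1} + (−s) = s·τ^{2w} + (−B − 1)·τ^w + (−s − τ^{w−1}) holds. -/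

import Mathlib

open Complex

noncomputable section

/-- The lattice `ℤ[τ] = {a + b·τ : a, b ∈ ℤ}` as a subset of `ℂ`. -/
def Ztau (τ : ℂ) : Set ℂ := {z | ∃ a b : ℤ, z = (a : ℂ) + (b : ℂ) * τ}

/-- `z` is divisible by `τ` in `ℤ[τ]`. -/
def TauDvd (τ : ℂ) (z : ℂ) : Prop := ∃ y ∈ Ztau τ, z = τ * y

/-- `x` is a minimal norm representative modulo `τ^w`: an element of `ℤ[τ]`,
not divisible by `τ`, of minimal norm in its residue class modulo `τ^w`. -/
def MinNormRep (τ : ℂ) (w : ℕ) (x : ℂ) : Prop :=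
  x ∈ Ztau τ ∧ ¬ TauDvd τ x ∧
    ∀ y ∈ Ztau τ, ‖x‖ ≤ ‖x - τ ^ w * y‖

/-- `τ = i·√q`. -/
def tau0 (q : ℤ) : ℂ := I * (Real.sqrt q : ℂ)

/-- `A = q^{(w+1)/2}/2`. -/
def A18 (q : ℤ) (w : ℕ) : ℂ := (q : ℂ) ^ ((w + 1) / 2) / 2

/-- `B = A/τ`. -/
def B18 (q : ℤ) (w : ℕ) : ℂ := A18 q w / tau0 q

/-- `s = (−1)^{(w+1)/2}`. -/
def s18 (w : ℕ) : ℂ := (-1) ^ ((w + 1) / 2)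

/-!
For `w = 2k + 1` the multiples of `τ^w` in `ℤ[τ]` form the rectangular lattice
`q^(k+1) ℤ + q^k ℤ τ`, while `‖u + vτ‖² = u² + q v²`. Hence the two coordinates can be
minimised separately: `u + vτ` is of minimal norm in its class once `2|u| ≤ q^(k+1)` and
`2|v| ≤ q^k`, and it is prime to `τ` iff `q ∤ u`. For even `q = 2c` one has `A = c q^k` and
`B = -c q^(k-1) τ`, and all the listed elements satisfy these bounds; the identity (e) is a
computation with `τ² = -q`.
-/

section Tau0

variable {q : ℤ}

lemma tau0_sq (hq : 0 ≤ q) : tau0 q ^ 2 = -q := by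
  rw [tau0, mul_pow, I_sq, ← ofReal_pow, Real.sq_sqrt (Int.cast_nonneg hq)]
  simp

lemma tau0_pow_two_mul (hq : 0 ≤ q) (k : ℕ) : tau0 q ^ (2 * k) = (-q : ℂ) ^ k := by
  rw [pow_mul, tau0_sq hq]

lemma tau0_pow_two_mul_add_one (hq : 0 ≤ q) (k : ℕ) :
    tau0 q ^ (2 * k + 1) = (-q : ℂ) ^ k * tau0 q := by
  rw [pow_succ, tau0_pow_two_mul hq]

lemma tau0_ne_zero (hq : 0 < q) : tau0 q ≠ 0 := by
  intro h
  have := tau0_sq hq.le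
  rw [h] at this
  norm_num at this
  omega

lemma norm_sq_intCast_add_intCast_mul_tau0 (hq : 0 ≤ q) (u v : ℤ) :
    ‖(u : ℂ) + v * tau0 q‖ ^ 2 = ((u ^ 2 + v ^ 2 * q : ℤ) : ℝ) := by
  have hr : Real.sqrt q ^ 2 = q := Real.sq_sqrt (Int.cast_nonneg hq)
  rw [Complex.sq_norm, Complex.normSq_apply]
  simp [tau0]
  linear_combination (v : ℝ) ^ 2 * hr

lemma exists_tau0_pow_mul_eq (hq : 0 ≤ q) (k : ℕ) {y : ℂ} (hy : y ∈ Ztau (tau0 q)) :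
    ∃ m n : ℤ,
      tau0 q ^ (2 * k + 1) * y = ((m * q ^ (k + 1) : ℤ) : ℂ) + (n * q ^ k : ℤ) * tau0 q := by
  obtain ⟨a, b, rfl⟩ := hy
  refine ⟨-b * (-1) ^ k, a * (-1) ^ k, ?_⟩
  rw [tau0_pow_two_mul_add_one hq, neg_pow]
  push_cast
  linear_combination ((-1) ^ k * (q : ℂ) ^ k * b) * tau0_sq hq

lemma not_tauDvd_tau0 (hq : 0 ≤ q) {u : ℤ} (hu : ¬ q ∣ u) (v : ℤ) :
    ¬ TauDvd (tau0 q) ((u : ℂ) + v * tau0 q) := by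
  rintro ⟨y, ⟨a, b, rfl⟩, h⟩
  have h' : ((u + b * q : ℤ) : ℂ) = (a - v : ℤ) * tau0 q := by
    push_cast
    linear_combination h + (b : ℂ) * tau0_sq hq
  have hre := congrArg Complex.re h'
  have hre' : u + b * q = 0 := by exact_mod_cast (by simpa [tau0] using hre : (u + b * q : ℝ) = 0)
  exact hu ⟨-b, by linear_combination hre'⟩

end Tau0

lemma abs_le_abs_sub_mul_of_two_mul_abs_le {u c : ℤ} (h : 2 * |u| ≤ c) (m : ℤ) :
    |u| ≤ |u - m * c| := by
  rcases eq_or_ne m 0 with rfl | hm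
  · simp
  have hc : c ≤ |m * c| := by
    rw [abs_mul]
    exact (le_abs_self c).trans (le_mul_of_one_le_left (abs_nonneg c) (Int.one_le_abs hm))
  have := abs_sub_abs_le_abs_sub (m * c) u
  rw [abs_sub_comm] at this
  linarith

lemma minNormRep_tau0 {q : ℤ} (hq : 0 ≤ q) (k : ℕ) {u v : ℤ} (hu : 2 * |u| ≤ q ^ (k + 1))
    (hv : 2 * |v| ≤ q ^ k) (hqu : ¬ q ∣ u) {x : ℂ} (hx : x = u + v * tau0 q) :
    MinNormRep (tau0 q) (2 * k + 1) x := by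
  subst hx
  refine ⟨⟨u, v, rfl⟩, not_tauDvd_tau0 hq hqu v, fun y hy => ?_⟩
  obtain ⟨m, n, hmn⟩ := exists_tau0_pow_mul_eq hq k hy
  have hsub : (u : ℂ) + v * tau0 q - tau0 q ^ (2 * k + 1) * y
      = ((u - m * q ^ (k + 1) : ℤ) : ℂ) + (v - n * q ^ k : ℤ) * tau0 q := by
    rw [hmn]; push_cast; ring
  rw [hsub]
  refine le_of_sq_le_sq ?_ (norm_nonneg _)
  rw [norm_sq_intCast_add_intCast_mul_tau0 hq, norm_sq_intCast_add_intCast_mul_tau0 hq,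
    Int.cast_le]
  have hu' := sq_le_sq.mpr (abs_le_abs_sub_mul_of_two_mul_abs_le hu m)
  have hv' := sq_le_sq.mpr (abs_le_abs_sub_mul_of_two_mul_abs_le hv n)
  exact add_le_add hu' (mul_le_mul_of_nonneg_right hv' hq)

lemma not_dvd_add_mul_of_isUnit {R : Type*} [CommRing R] {q ε : R} (hq : ¬ IsUnit q)
    (hε : IsUnit ε) (t : R) : ¬ q ∣ ε + q * t := fun h =>
  hq (isUnit_of_dvd_unit ((dvd_add_left (dvd_mul_right q t)).mp h) hε)

section Construction

variable {q c : ℤ}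

lemma not_isUnit_of_two_le (hq : 2 ≤ q) : ¬ IsUnit q := by
  rw [Int.isUnit_iff]; omega

lemma two_le_pow_succ (hq : 2 ≤ q) (n : ℕ) : 2 ≤ q ^ (n + 1) :=
  hq.trans (le_self_pow₀ (by omega) n.succ_ne_zero)

lemma A18_two_mul_add_one (hc : q = c + c) (k : ℕ) :
    A18 q (2 * k + 1) = ((c * q ^ k : ℤ) : ℂ) := by
  rw [A18, show (2 * k + 1 + 1) / 2 = k + 1 by omega, pow_succ]
  push_cast [hc]
  ring

lemma B18_two_mul_add_one (hq : 0 < q) (hc : q = c + c) (k : ℕ) :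
    B18 q (2 * (k + 1) + 1) = ((-(c * q ^ k) : ℤ) : ℂ) * tau0 q := by
  rw [B18, A18_two_mul_add_one hc, div_eq_iff (tau0_ne_zero hq), mul_assoc, ← sq,
    tau0_sq hq.le]
  push_cast
  ring

lemma s18_two_mul_add_one (k : ℕ) : s18 (2 * k + 1) = (-1) ^ (k + 1) := by
  rw [s18, show (2 * k + 1 + 1) / 2 = k + 1 by omega]

lemma minNormRep_intCast_of_isUnit (hq : 2 ≤ q) (k : ℕ) {ε : ℤ} (hε : IsUnit ε) :
    MinNormRep (tau0 q) (2 * k + 1) ε := by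
  have hQ := two_le_pow_succ hq k
  refine minNormRep_tau0 (by omega) k (u := ε) (v := 0) ?_ (by simp; positivity) ?_ (by simp)
  · rw [Int.isUnit_iff_abs_eq.mp hε]; omega
  · simpa using not_dvd_add_mul_of_isUnit (not_isUnit_of_two_le hq) hε 0

lemma minNormRep_A18_sub_one_sub_tau0 (hq : 2 ≤ q) (hc : q = c + c) (k : ℕ) :
    MinNormRep (tau0 q) (2 * (k + 1) + 1) (A18 q (2 * (k + 1) + 1) - 1 - tau0 q) := by
  have hQ := two_le_pow_succ hq k
  have hA : 1 ≤ c * q ^ (k + 1) := by nlinarith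
  refine minNormRep_tau0 (by omega) (k + 1) (u := c * q ^ (k + 1) - 1) (v := -1) ?_
    (by simp; omega) ?_ (by rw [A18_two_mul_add_one hc]; push_cast; ring)
  · rw [abs_of_nonneg (by omega), pow_succ q (k + 1), hc]; linarith
  · have := not_dvd_add_mul_of_isUnit (not_isUnit_of_two_le hq) isUnit_one.neg (c * q ^ k)
    rwa [show -1 + q * (c * q ^ k) = c * q ^ (k + 1) - 1 by ring] at this

lemma minNormRep_neg_B18_sub_one (hq : 2 ≤ q) (hc : q = c + c) (k : ℕ) :
    MinNormRep (tau0 q) (2 * (k + 1) + 1) (-B18 q (2 * (k + 1) + 1) - 1) := by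
  have hQ := two_le_pow_succ hq k
  have hc0 : 0 < c := by omega
  refine minNormRep_tau0 (by omega) (k + 1) (u := -1) (v := c * q ^ k)
    (by simpa using two_le_pow_succ hq (k + 1)) ?_
    (by simpa using not_dvd_add_mul_of_isUnit (not_isUnit_of_two_le hq) isUnit_one.neg 0)
    (by rw [B18_two_mul_add_one (by omega) hc]; push_cast; ring)
  rw [abs_of_nonneg (by positivity), pow_succ, hc]; linarith

lemma minNormRep_neg_s18_sub_tau0_pow (hq : 2 ≤ q) (k : ℕ) :
    MinNormRep (tau0 q) (2 * (k + 1) + 1) (-s18 (2 * (k + 1) + 1) - tau0 q ^ (2 * (k + 1))) := by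
  have hQ := two_le_pow_succ hq k
  refine minNormRep_tau0 (by omega) (k + 1) (u := (-1) ^ (k + 1) * (1 - q ^ (k + 1))) (v := 0)
    ?_ (by simp; positivity) ?_
    (by rw [s18_two_mul_add_one, tau0_pow_two_mul (by omega)]; push_cast; ring)
  · rw [abs_mul, abs_pow, abs_neg, abs_one, one_pow, one_mul, abs_sub_comm,
      abs_of_nonneg (by omega : 0 ≤ q ^ (k + 1) - 1), pow_succ q (k + 1)]
    nlinarith
  · have := not_dvd_add_mul_of_isUnit (not_isUnit_of_two_le hq) (isUnit_neg_one.pow (k + 1))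
      (-(-1) ^ (k + 1) * q ^ k)
    rwa [show (-1) ^ (k + 1) + q * (-(-1) ^ (k + 1) * q ^ k)
      = (-1) ^ (k + 1) * (1 - q ^ (k + 1)) by ring] at this

lemma A18_sub_one_sub_tau0_mul_pow_add_neg_s18 (hq : 0 < q) (hc : q = c + c) {w : ℕ} (k : ℕ)
    (hw : w = 2 * (k + 1) + 1) :
    (A18 q w - 1 - tau0 q) * tau0 q ^ (w - 1) + -s18 w
      = s18 w * tau0 q ^ (2 * w) + (-B18 q w - 1) * tau0 q ^ w + (-s18 w - tau0 q ^ (w - 1)) := by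
  subst hw
  have hcC : (q : ℂ) = c + c := by exact_mod_cast hc
  have hsign : ((-1 : ℂ) ^ k) ^ 2 = 1 := by
    rw [← pow_mul, mul_comm, pow_mul, neg_one_sq, one_pow]
  rw [A18_two_mul_add_one hc, B18_two_mul_add_one hq hc, s18_two_mul_add_one, Nat.add_sub_cancel,
    tau0_pow_two_mul hq.le, tau0_pow_two_mul hq.le, tau0_pow_two_mul_add_one hq.le]
  push_cast
  linear_combination (-(c * q ^ k * (-q) ^ (k + 1)) : ℂ) * tau0_sq hq.le
    - ((q : ℂ) ^ (k + 1) * (-q) ^ (k + 1)) * hcC + ((q : ℂ) ^ (2 * k + 3) * (-1) ^ k) * hsign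

end Construction

/-- The counter-example construction for `p = 0`, even `q ≥ 2`, and odd
`w ≥ 3`: `A` is a rational integer, `B ∈ ℤ[τ]`, (a)–(d) the listed elements
are minimal norm representatives modulo `τ^w`, and (e) the stated identity
holds in `ℤ[τ]`. -/
theorem nonopt_construction_p0_q_even (q : ℤ) (hq : 2 ≤ q) (hqe : Even q)
    (w : ℕ) (hw : 3 ≤ w) (hwodd : Odd w) :
    (∃ a : ℤ, A18 q w = (a : ℂ)) ∧
    B18 q w ∈ Ztau (tau0 q) ∧
    (MinNormRep (tau0 q) w 1 ∧ MinNormRep (tau0 q) w (-1)) ∧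
    MinNormRep (tau0 q) w (A18 q w - 1 - tau0 q) ∧
    MinNormRep (tau0 q) w (-(B18 q w) - 1) ∧
    MinNormRep (tau0 q) w (-(s18 w) - tau0 q ^ (w - 1)) ∧
    (A18 q w - 1 - tau0 q) * tau0 q ^ (w - 1) + (-(s18 w))
      = s18 w * tau0 q ^ (2 * w) + (-(B18 q w) - 1) * tau0 q ^ w
        + (-(s18 w) - tau0 q ^ (w - 1)) := by
  obtain ⟨c, hc⟩ := hqe
  obtain ⟨k, rfl⟩ : ∃ k, w = 2 * (k + 1) + 1 :=
    ⟨w / 2 - 1, by obtain ⟨j, rfl⟩ := hwodd; omega⟩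
  have hq0 : 0 < q := by omega
  refine ⟨⟨_, A18_two_mul_add_one hc _⟩,
    ⟨0, -(c * q ^ k), by rw [B18_two_mul_add_one hq0 hc]; push_cast; ring⟩,
    ⟨by simpa using minNormRep_intCast_of_isUnit hq _ isUnit_one,
      by simpa using minNormRep_intCast_of_isUnit hq _ isUnit_one.neg⟩,
    minNormRep_A18_sub_one_sub_tau0 hq hc k, minNormRep_neg_B18_sub_one hq hc k, ?_,
    A18_sub_one_sub_tau0_mul_pow_add_neg_s18 hq0 hc k rfl⟩
  simpa using minNormRep_neg_s18_sub_tau0_pow hq k
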